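/- arXiv:2512.11386 — 2 statements merged into one kernel-verified Lean document; each statement's English description precedes it below -/
import Mathlib

section
/- Let M be a complete pointed metric space, k a positive integer, and let FS_k(M) ⊆ F(M) denote the set of all elements of F(M) of the form ∑_{i=1}^k a_i δ(x_i) with a_1,…,a_k ∈ ℝ and x_1,…,x_k ∈ M (elements supported on at most k points). If W ⊆ FS_k(M) is bounded, then W is relatively norm-compact if and only if W is uniformly regular. -/
/-!
Compactness gives uniform regularity at once, because a finite `ε`-net of `W` is supported on
finitely many points. Conversely, regularity for `U = M` puts `W` within a small error of `F(K)`
for a compact `K`; since an element of `W` has at most `k` points, these points can be moved into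
`K` at a cost of at most `2 ^ k - 1` times that error. Along a subsequence the moved points
converge to limits `Y j`. Regularity for a punctured ball around each `Y j`, tested against
Lipschitz functions supported near `Y j`, shows that the clusters
`∑ b j • (δ (y j) - δ (Y j))` are small. What remains lies in the finite-dimensional span of the
`δ (Y j)`, so every sequence in `W` is, up to `ε`, a bounded sequence in a finite-dimensional
space, and `W` is totally bounded.
-/

open Metric Set Filter Pointwise

noncomputable section

/-- Data witnessing that the Banach space `F`, together with the map `toFun : M → F`
(playing the role of `δ`), is (isometrically) the Lipschitz free space over the
pointed metric space `M` with base point `base`: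
`toFun` sends the base point to `0`, is an isometry, has dense linear span, and every
Lipschitz function on `M` vanishing at `base` extends to a bounded linear functional. -/
structure FreeSpaceData (M : Type*) [MetricSpace M] (base : M)
    (F : Type*) [NormedAddCommGroup F] [NormedSpace ℝ F] where
  toFun : M → F
  map_base : toFun base = 0
  norm_sub : ∀ x y : M, ‖toFun x - toFun y‖ = dist x y
  dense_span : (Submodule.span ℝ (Set.range toFun)).topologicalClosure = ⊤
  extend : ∀ (K : NNReal) (f : M → ℝ), LipschitzWith K f → f base = 0 →
      ∃ φ : F →L[ℝ] ℝ, ‖φ‖ ≤ K ∧ ∀ x, φ (toFun x) = f x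

namespace FreeSpaceData

variable {M : Type*} [MetricSpace M] {base : M}
  {F : Type*} [NormedAddCommGroup F] [NormedSpace ℝ F]

/-- `F(S)`: the closed linear span of `δ(S ∪ {base})` inside the free space. -/
def freeSub (h : FreeSpaceData M base F) (S : Set M) : Submodule ℝ F :=
  (Submodule.span ℝ (h.toFun '' (S ∪ {base}))).topologicalClosure

/-- A bounded set `W ⊆ F(M)` is uniformly regular if for every `ε > 0` and every open
`U ⊆ M` there is a compact `K ⊆ U` with `W ⊆ F(K ∪ (M \ U)) + ε B_{F(M)}`. -/
def UniformlyRegular (h : FreeSpaceData M base F) (W : Set F) : Prop :=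
  Bornology.IsBounded W ∧
    ∀ ε : ℝ, 0 < ε → ∀ U : Set M, IsOpen U →
      ∃ K : Set M, K ⊆ U ∧ IsCompact K ∧
        W ⊆ ↑(h.freeSub (K ∪ Uᶜ)) + Metric.closedBall (0 : F) ε

/-- The elementary molecule `m_{xy} = (δ x - δ y)/d(x,y)`. -/
def molecule (h : FreeSpaceData M base F) (x y : M) : F :=
  (dist x y)⁻¹ • (h.toFun x - h.toFun y)

/-- The support of `γ ∈ F(M)`: the smallest closed `S ⊆ M` with `γ ∈ F(S)`. -/
def support (h : FreeSpaceData M base F) (γ : F) : Set M :=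
  ⋂₀ {S : Set M | IsClosed S ∧ γ ∈ h.freeSub S}

end FreeSpaceData

/-- A bounded set `W` is a V*-set if `sup_{w ∈ W} |x_n*(w)| → 0` for every weakly
unconditionally Cauchy series `∑ x_n*` in the dual. -/
def IsVStarSet {F : Type*} [NormedAddCommGroup F] [NormedSpace ℝ F] (W : Set F) : Prop :=
  Bornology.IsBounded W ∧
    ∀ φ : ℕ → (F →L[ℝ] ℝ), (∀ v : F, Summable fun n => |φ n v|) →
      Filter.Tendsto (fun n => ⨆ w : W, |φ n (w : F)|) Filter.atTop (nhds 0)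

/-- A set is relatively weakly compact if its closure in the weak topology is compact. -/
def RelWeaklyCompact (F : Type*) [NormedAddCommGroup F] [NormedSpace ℝ F]
    (W : Set F) : Prop :=
  IsCompact (closure (toWeakSpace ℝ F '' W))

/-- A set `W` is weakly precompact if every sequence in `W` has a weakly Cauchy
subsequence. -/
def WeaklyPrecompact {F : Type*} [NormedAddCommGroup F] [NormedSpace ℝ F]
    (W : Set F) : Prop :=
  ∀ u : ℕ → F, (∀ n, u n ∈ W) →
    ∃ s : ℕ → ℕ, StrictMono s ∧ ∀ φ : F →L[ℝ] ℝ, ∃ l : ℝ,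
      Filter.Tendsto (fun k => φ (u (s k))) Filter.atTop (nhds l)

/-- A metric space is scattered if every nonempty closed subset has an isolated point. -/
def Scattered (M : Type*) [MetricSpace M] : Prop :=
  ∀ S : Set M, IsClosed S → S.Nonempty →
    ∃ x ∈ S, ∃ ε : ℝ, 0 < ε ∧ S ∩ Metric.ball x ε = {x}

theorem IsCompact.exists_pos_forall_le_dist {M : Type*} [MetricSpace M] {K : Set M}
    (hK : IsCompact K) {p : M} (hp : p ∉ K) : ∃ r > 0, ∀ z ∈ K, r ≤ dist z p := by
  rcases K.eq_empty_or_nonempty with rfl | hne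
  · exact ⟨1, one_pos, by simp⟩
  obtain ⟨z₀, hz₀, hmin⟩ :=
    hK.exists_isMinOn hne (continuous_id.dist continuous_const).continuousOn
  exact ⟨dist z₀ p, dist_pos.2 fun h => hp (h ▸ hz₀), fun z hz => hmin hz⟩

theorem LipschitzWith.max_zero_sub_dist {M : Type*} [MetricSpace M] (D : ℝ) (p : M) :
    LipschitzWith 1 fun z => max 0 (D - dist z p) := by
  have : LipschitzWith 1 fun z => D - dist z p := by
    simpa using (LipschitzWith.const D).sub (LipschitzWith.dist_left p)
  exact this.const_max 0

theorem LipschitzWith.exists_eq_near_eq_zero_far {M : Type*} [MetricSpace M] {f : M → ℝ}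
    (hf : LipschitzWith 1 f) (p : M) (hfp : f p = 0) (r : ℝ) :
    ∃ g : M → ℝ, LipschitzWith 1 g ∧ g p = 0 ∧ (∀ z, dist z p ≤ r / 2 → g z = f z) ∧
      ∀ z, r ≤ dist z p → g z = 0 := by
  set m : M → ℝ := fun z => max 0 (r - dist z p)
  have hm : LipschitzWith 1 m := LipschitzWith.max_zero_sub_dist r p
  have hm0 : ∀ z, 0 ≤ m z := fun z => le_max_left _ _
  have hfz : ∀ z, |f z| ≤ dist z p := fun z => by
    simpa [hfp, Real.dist_eq] using hf.dist_le_mul z p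
  refine ⟨fun z => max (-m z) (min (f z) (m z)), by simpa using hm.neg.max (hf.min hm), ?_, ?_, ?_⟩
  · simp [hfp, hm0 p]
  · intro z hz
    have hmz : m z = r - dist z p := max_eq_right (by linarith [dist_nonneg (x := z) (y := p)])
    have := abs_le.1 (hfz z)
    simp only
    rw [min_eq_left (by linarith), max_eq_right (by linarith)]
  · intro z hz
    have hmz : m z = 0 := max_eq_left (by linarith)
    simp [hmz]

theorem totallyBounded_of_forall_exists_subseq_near_finiteDimensional {E : Type*}
    [NormedAddCommGroup E] [NormedSpace ℝ E] {W : Set E} (hWb : Bornology.IsBounded W)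
    (H : ∀ u : ℕ → E, (∀ n, u n ∈ W) → ∀ ε > 0, ∃ φ : ℕ → ℕ, StrictMono φ ∧
      ∃ P : Submodule ℝ E, FiniteDimensional ℝ P ∧ ∀ n, ∃ v ∈ P, ‖u (φ n) - v‖ ≤ ε) :
    TotallyBounded W := by
  rw [Metric.totallyBounded_iff]
  intro ε hε
  by_contra! hW
  obtain ⟨u, hu⟩ := seq_of_forall_finite_exists
    (P := fun w t => w ∈ W ∧ ∀ z ∈ t, ε ≤ dist w z) fun t ht => by
      obtain ⟨w, hwW, hwt⟩ := not_subset.1 (hW t ht)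
      exact ⟨w, hwW, fun z hz => not_lt.1 fun hlt => hwt (mem_iUnion₂.2 ⟨z, hz, hlt⟩)⟩
  obtain ⟨φ, hφ, P, hP, hv⟩ := H u (fun n => (hu n).1) (ε / 4) (by positivity)
  choose v hvP hv using hv
  obtain ⟨R, hR⟩ := hWb.exists_norm_le
  have hbd : ∀ n, (⟨v n, hvP n⟩ : P) ∈ closedBall (0 : P) (R + ε / 4) := fun n => by
    rw [mem_closedBall_zero_iff, Submodule.coe_norm]
    calc ‖v n‖ ≤ ‖u (φ n)‖ + ‖u (φ n) - v n‖ := norm_le_norm_add_norm_sub _ _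
      _ ≤ R + ε / 4 := add_le_add (hR _ (hu _).1) (hv n)
  obtain ⟨L, -, ψ, hψ, hL⟩ := tendsto_subseq_of_bounded isBounded_closedBall hbd
  obtain ⟨N, hN⟩ := Metric.tendsto_atTop.1 hL (ε / 8) (by positivity)
  have hvv : dist (v (ψ (N + 1))) (v (ψ N)) < ε / 4 := by
    have h₁ := hN (N + 1) (by omega)
    have h₂ := hN N le_rfl
    have := dist_triangle_right (⟨v (ψ (N + 1)), hvP _⟩ : P) ⟨v (ψ N), hvP _⟩ L
    simp only [Function.comp_apply, Subtype.dist_eq] at h₁ h₂ this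
    linarith
  have huv : ∀ n, dist (u (φ n)) (v n) ≤ ε / 4 := fun n => (dist_eq_norm _ _).trans_le (hv n)
  have huu := (hu (φ (ψ (N + 1)))).2 _ ⟨φ (ψ N), hφ (hψ N.lt_succ_self), rfl⟩
  have := dist_triangle4 (u (φ (ψ (N + 1)))) (v (ψ (N + 1))) (v (ψ N)) (u (φ (ψ N)))
  linarith [huv (ψ (N + 1)), huv (ψ N), dist_comm (v (ψ N)) (u (φ (ψ N)))]

namespace FreeSpaceData

variable {M : Type*} [MetricSpace M] {base : M} {F : Type*} [NormedAddCommGroup F]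
  [NormedSpace ℝ F] (h : FreeSpaceData M base F) {ι : Type*} [Fintype ι]

theorem freeSub_mono {S T : Set M} (hST : S ⊆ T) : h.freeSub S ≤ h.freeSub T :=
  Submodule.topologicalClosure_mono <| Submodule.span_mono <| image_mono <|
    union_subset_union_left _ hST

theorem toFun_mem_freeSub {S : Set M} {x : M} (hx : x ∈ S ∪ {base}) :
    h.toFun x ∈ h.freeSub S :=
  Submodule.le_topologicalClosure _ <| Submodule.subset_span ⟨x, hx, rfl⟩

theorem sum_smul_toFun_mem_freeSub (a : ι → ℝ) (x : ι → M) :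
    ∑ i, a i • h.toFun (x i) ∈ h.freeSub (range x) :=
  Submodule.sum_mem _ fun i _ => Submodule.smul_mem _ _ <| h.toFun_mem_freeSub <| .inl ⟨i, rfl⟩

theorem norm_smul_toFun_sub_toFun (c : ℝ) (x y : M) :
    ‖c • (h.toFun x - h.toFun y)‖ = |c| * dist x y := by
  rw [norm_smul, Real.norm_eq_abs, h.norm_sub]

theorem abs_sum_mul_le_norm_sub {S : Set M} {g : M → ℝ} (hg : LipschitzWith 1 g)
    (hgS : ∀ z ∈ S ∪ {base}, g z = 0) {γ : F} (hγ : γ ∈ h.freeSub S) (a : ι → ℝ) (x : ι → M) :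
    |∑ i, a i * g (x i)| ≤ ‖∑ i, a i • h.toFun (x i) - γ‖ := by
  obtain ⟨φ, hφ, hφx⟩ := h.extend 1 g hg (hgS base (.inr rfl))
  have hφS : h.freeSub S ≤ LinearMap.ker (φ : F →ₗ[ℝ] ℝ) := by
    refine Submodule.topologicalClosure_minimal _ (Submodule.span_le.2 ?_) φ.isClosed_ker
    rintro - ⟨z, hz, rfl⟩
    simp [hφx, hgS z hz]
  have hφγ : φ γ = 0 := hφS hγ
  have heval : φ (∑ i, a i • h.toFun (x i) - γ) = ∑ i, a i * g (x i) := by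
    simp [hφγ, hφx]
  calc |∑ i, a i * g (x i)| = ‖φ (∑ i, a i • h.toFun (x i) - γ)‖ := by rw [heval]; rfl
    _ ≤ ‖φ‖ * ‖∑ i, a i • h.toFun (x i) - γ‖ := φ.le_opNorm _
    _ ≤ ‖∑ i, a i • h.toFun (x i) - γ‖ := by
      simpa using mul_le_mul_of_nonneg_right hφ (norm_nonneg _)

variable {S : Set M} {γ : F}

open scoped Classical in
theorem abs_sum_fiber_mul_infDist_le (hbS : base ∈ S) (hγ : γ ∈ h.freeSub S) (a : ι → ℝ)
    (x : ι → M) (p : M) :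
    |∑ i with x i = p, a i| * infDist p (S ∪ (range x \ {p})) ≤
      ‖∑ i, a i • h.toFun (x i) - γ‖ := by
  set T := S ∪ (range x \ {p})
  set D := infDist p T
  have hD : 0 ≤ D := infDist_nonneg
  have hT : ∀ z ∈ T, max 0 (D - dist z p) = 0 := fun z hz =>
    max_eq_left <| by linarith [dist_comm z p ▸ infDist_le_dist_of_mem (x := p) hz]
  have hsum : ∑ i, a i * max 0 (D - dist (x i) p) = (∑ i with x i = p, a i) * D := by
    rw [Finset.sum_filter, Finset.sum_mul]
    refine Finset.sum_congr rfl fun i _ => ?_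
    split_ifs with hi
    · simp [hi, hD]
    · rw [hT _ (.inr ⟨⟨i, rfl⟩, hi⟩), mul_zero, zero_mul]
  have := h.abs_sum_mul_le_norm_sub (LipschitzWith.max_zero_sub_dist D p)
    (fun z hz => hT z (hz.elim .inl fun hz => .inl (hz ▸ hbS))) hγ a x
  rwa [hsum, abs_mul, abs_of_nonneg hD] at this

open scoped Classical in
/-- Moving the whole fiber of `x` over `p` at once, rather than a single index, is what makes the
set of points outside `S` shrink. -/
theorem exists_range_diff_ssubset (hbS : base ∈ S) (hγ : γ ∈ h.freeSub S) (a : ι → ℝ)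
    {x : ι → M} {c : ℝ} (hc : ‖∑ i, a i • h.toFun (x i) - γ‖ < c) {p : M}
    (hp : p ∈ range x \ S) :
    ∃ x' : ι → M, range x' \ S ⊂ range x \ S ∧
      ‖∑ i, a i • h.toFun (x i) - ∑ i, a i • h.toFun (x' i)‖ < c := by
  set A := ∑ i with x i = p, a i
  obtain ⟨t, ht, htc⟩ : ∃ t ∈ S ∪ (range x \ {p}), |A| * dist p t < c := by
    by_cases hA : A = 0
    · exact ⟨base, .inl hbS, by simpa [hA] using (norm_nonneg _).trans_lt hc⟩
    have hlt : infDist p (S ∪ (range x \ {p})) < c / |A| := by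
      rw [lt_div_iff₀ (abs_pos.2 hA), mul_comm]
      exact (h.abs_sum_fiber_mul_infDist_le hbS hγ a x p).trans_lt hc
    obtain ⟨t, ht, htd⟩ := (infDist_lt_iff ⟨base, .inl hbS⟩).1 hlt
    exact ⟨t, ht, by rwa [lt_div_iff₀ (abs_pos.2 hA), mul_comm] at htd⟩
  have htp : t ≠ p := fun htp => ht.elim (fun htS => hp.2 (htp ▸ htS)) fun ht => ht.2 htp
  refine ⟨fun i => if x i = p then t else x i, ?_, ?_⟩
  · have hsub : (range fun i => if x i = p then t else x i) \ S ⊆ range x \ S := by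
      rintro - ⟨⟨i, rfl⟩, hiS⟩
      refine ⟨?_, hiS⟩
      dsimp only at hiS ⊢
      split_ifs at hiS ⊢ with hi
      · exact (ht.resolve_left hiS).1
      · exact ⟨i, rfl⟩
    refine (ssubset_iff_of_subset hsub).2 ⟨p, hp, ?_⟩
    rintro ⟨⟨i, hi⟩, -⟩
    dsimp only at hi
    split_ifs at hi with hxi
    exacts [htp hi, hxi hi]
  · have hdiff : ∑ i, a i • h.toFun (x i) - ∑ i, a i • h.toFun (if x i = p then t else x i) =
        A • (h.toFun p - h.toFun t) := by
      rw [← Finset.sum_sub_distrib, show A = _ from Finset.sum_filter _ _, Finset.sum_smul]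
      refine Finset.sum_congr rfl fun i _ => ?_
      split_ifs with hi
      · rw [hi, smul_sub]
      · rw [sub_self, zero_smul]
    rwa [hdiff, h.norm_smul_toFun_sub_toFun]

/-- Each step costs less than `c` and leaves a distance less than `2 * c` to `F(S)`, whence the
factor `2 ^ n - 1`. -/
theorem exists_forall_mem_norm_sub_le (hbS : base ∈ S) (hγ : γ ∈ h.freeSub S) (a : ι → ℝ) :
    ∀ (n : ℕ) (x : ι → M) {c : ℝ}, (range x \ S).ncard ≤ n →
      ‖∑ i, a i • h.toFun (x i) - γ‖ < c →
      ∃ y : ι → M, (∀ i, y i ∈ S) ∧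
        ‖∑ i, a i • h.toFun (x i) - ∑ i, a i • h.toFun (y i)‖ ≤ (2 ^ n - 1) * c := by
  intro n
  induction n with
  | zero =>
    intro x c hn _
    have hx : range x \ S = ∅ := (ncard_eq_zero (toFinite _)).1 (Nat.le_zero.1 hn)
    refine ⟨x, fun i => ?_, by simp⟩
    by_contra hi
    exact (eq_empty_iff_forall_notMem.1 hx) (x i) ⟨⟨i, rfl⟩, hi⟩
  | succ n ih =>
    intro x c hn hc
    by_cases hx : ∀ i, x i ∈ S
    · have h2 : (1 : ℝ) ≤ 2 ^ (n + 1) := one_le_pow₀ (by norm_num)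
      exact ⟨x, hx, by simpa using mul_nonneg (sub_nonneg.2 h2) ((norm_nonneg _).trans hc.le)⟩
    obtain ⟨i, hi⟩ := not_forall.1 hx
    obtain ⟨x', hx'S, hx'c⟩ := h.exists_range_diff_ssubset hbS hγ a hc ⟨⟨i, rfl⟩, hi⟩
    have hn' : (range x' \ S).ncard ≤ n := by
      have := ncard_lt_ncard hx'S; omega
    have hc' : ‖∑ i, a i • h.toFun (x' i) - γ‖ < 2 * c := by
      have := norm_sub_le_norm_sub_add_norm_sub (∑ i, a i • h.toFun (x' i))
        (∑ i, a i • h.toFun (x i)) γ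
      rw [norm_sub_rev _ (∑ i, a i • h.toFun (x i))] at this
      linarith
    obtain ⟨y, hyS, hy⟩ := ih x' hn' hc'
    refine ⟨y, hyS, ?_⟩
    calc _ ≤ ‖∑ i, a i • h.toFun (x i) - ∑ i, a i • h.toFun (x' i)‖ +
          ‖∑ i, a i • h.toFun (x' i) - ∑ i, a i • h.toFun (y i)‖ :=
            norm_sub_le_norm_sub_add_norm_sub _ _ _
      _ ≤ c + (2 ^ n - 1) * (2 * c) := add_le_add hx'c.le hy
      _ = (2 ^ (n + 1) - 1) * c := by ring

theorem norm_sum_smul_sub_le {p : M} {r : ℝ}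
    (hS : ∀ z ∈ S ∪ {base}, z = p ∨ r ≤ dist z p) (hγ : γ ∈ h.freeSub S) (b : ι → ℝ)
    (y : ι → M) (J : Finset ι) (hnear : ∀ j ∈ J, dist (y j) p ≤ r / 2)
    (hfar : ∀ j ∉ J, r ≤ dist (y j) p) :
    ‖∑ j ∈ J, b j • (h.toFun (y j) - h.toFun p)‖ ≤ ‖∑ j, b j • h.toFun (y j) - γ‖ := by
  set v := ∑ j ∈ J, b j • (h.toFun (y j) - h.toFun p)
  rcases eq_or_ne ‖v‖ 0 with hv | hv
  · rw [hv]; exact norm_nonneg _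
  obtain ⟨φ, hφ, hφv⟩ := exists_dual_vector ℝ v hv
  have hf : LipschitzWith 1 fun z => φ (h.toFun z - h.toFun p) := by
    refine LipschitzWith.of_dist_le_mul fun z w => ?_
    rw [Real.dist_eq, ← map_sub, sub_sub_sub_cancel_right, NNReal.coe_one, one_mul,
      ← h.norm_sub]
    simpa [hφ] using φ.le_opNorm (h.toFun z - h.toFun w)
  obtain ⟨g, hg, hgp, hg_near, hg_far⟩ := hf.exists_eq_near_eq_zero_far p (by simp) r
  have hgS : ∀ z ∈ S ∪ {base}, g z = 0 := fun z hz =>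
    (hS z hz).elim (fun hz => hz ▸ hgp) (hg_far z)
  have hsum : ∑ j, b j * g (y j) = ‖v‖ := by
    rw [← Finset.sum_subset J.subset_univ fun j _ hj => by rw [hg_far _ (hfar j hj), mul_zero]]
    have : φ v = ‖v‖ := hφv
    rw [← this, map_sum]
    refine Finset.sum_congr rfl fun j hj => ?_
    rw [map_smul, smul_eq_mul, hg_near _ (hnear j hj)]
  simpa [hsum] using h.abs_sum_mul_le_norm_sub hg hgS hγ b y

/-- The clusters over the distinct values of `Y` are estimated separately, whence the factor
`Fintype.card ι`. -/
theorem norm_sum_sub_sum_le_of_clustered {w : F} {ε : ℝ} (hε : 0 ≤ ε) (b : ι → ℝ) (y Y : ι → M)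
    {r : M → ℝ} {S : M → Set M}
    (hS : ∀ i, ∀ z ∈ S (Y i) ∪ {base}, z = Y i ∨ r (Y i) ≤ dist z (Y i))
    (hY : ∀ i j, Y j = Y i ∨ r (Y i) ≤ dist (Y j) (Y i))
    (hwS : ∀ i, w ∈ (h.freeSub (S (Y i)) : Set F) + closedBall 0 ε)
    (hy : ∀ i j, dist (y j) (Y j) ≤ r (Y i) / 4) :
    ‖∑ j, b j • h.toFun (y j) - ∑ j, b j • h.toFun (Y j)‖ ≤
      Fintype.card ι * (‖w - ∑ j, b j • h.toFun (y j)‖ + ε) := by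
  classical
  have hfib : ∑ j, b j • h.toFun (y j) - ∑ j, b j • h.toFun (Y j) =
      ∑ p ∈ Finset.univ.image Y, ∑ j with Y j = p, b j • (h.toFun (y j) - h.toFun p) := by
    rw [← Finset.sum_sub_distrib, ← Finset.sum_fiberwise_of_maps_to
      fun j _ => Finset.mem_image_of_mem Y (Finset.mem_univ j)]
    refine Finset.sum_congr rfl fun p _ => Finset.sum_congr rfl fun j hj => ?_
    rw [(Finset.mem_filter.1 hj).2, smul_sub]
  have hcluster : ∀ p ∈ Finset.univ.image Y,
      ‖∑ j with Y j = p, b j • (h.toFun (y j) - h.toFun p)‖ ≤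
        ‖w - ∑ j, b j • h.toFun (y j)‖ + ε := by
    simp only [Finset.mem_image, Finset.mem_univ, true_and]
    rintro - ⟨i, rfl⟩
    obtain ⟨γ, hγ, e, he, rfl⟩ := hwS i
    have hr : 0 ≤ r (Y i) := by linarith [hy i i, dist_nonneg (x := y i) (y := Y i)]
    have hnear : ∀ j ∈ Finset.univ.filter fun j => Y j = Y i, dist (y j) (Y i) ≤ r (Y i) / 2 / 2 :=
      fun j hj => by linarith [(Finset.mem_filter.1 hj).2 ▸ hy i j]
    have hfar : ∀ j ∉ Finset.univ.filter fun j => Y j = Y i, r (Y i) / 2 ≤ dist (y j) (Y i) := by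
      intro j hj
      have hYj := (hY i j).resolve_left fun hj' => hj (Finset.mem_filter.2 ⟨Finset.mem_univ j, hj'⟩)
      linarith [hy i j, dist_triangle_left (Y j) (Y i) (y j)]
    calc _ ≤ ‖∑ j, b j • h.toFun (y j) - γ‖ :=
          h.norm_sum_smul_sub_le (fun z hz => (hS i z hz).imp_right fun hz => by linarith) hγ
            b y _ hnear hfar
      _ = ‖(∑ j, b j • h.toFun (y j) - (γ + e)) + e‖ := by
          rw [sub_add_eq_sub_sub, sub_add_cancel]
      _ ≤ ‖γ + e - ∑ j, b j • h.toFun (y j)‖ + ‖e‖ := by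
          rw [norm_sub_rev (γ + e)]; exact norm_add_le _ _
      _ ≤ _ := by gcongr; simpa using he
  rw [hfib]
  calc _ ≤ ∑ p ∈ Finset.univ.image Y, ‖∑ j with Y j = p, b j • (h.toFun (y j) - h.toFun p)‖ :=
        norm_sum_le _ _
    _ ≤ (Finset.univ.image Y).card • (‖w - ∑ j, b j • h.toFun (y j)‖ + ε) :=
        Finset.sum_le_card_nsmul _ _ _ hcluster
    _ ≤ _ := by
        rw [nsmul_eq_mul]
        gcongr
        exact_mod_cast Finset.card_image_le.trans_eq Finset.card_univ

variable {h} {W : Set F}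

theorem uniformlyRegular_of_totallyBounded (hW : TotallyBounded W)
    (hWb : Bornology.IsBounded W) (hfin : ∀ w ∈ W, ∃ A : Set M, A.Finite ∧ w ∈ h.freeSub A) :
    h.UniformlyRegular W := by
  refine ⟨hWb, fun ε hε U _ => ?_⟩
  obtain ⟨t, htW, ht, hWt⟩ := finite_approx_of_totallyBounded hW ε hε
  choose! A hA hwA using hfin
  refine ⟨(⋃ w ∈ t, A w) ∩ U, inter_subset_right,
    ((ht.biUnion fun w hw => hA w (htW hw)).inter_of_left U).isCompact, fun v hv => ?_⟩
  obtain ⟨w, hwt, hvw⟩ := mem_iUnion₂.1 (hWt hv)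
  have hAw : A w ⊆ (⋃ w ∈ t, A w) ∩ U ∪ Uᶜ := fun z hz => by
    by_cases hzU : z ∈ U
    exacts [.inl ⟨mem_iUnion₂.2 ⟨w, hwt, hz⟩, hzU⟩, .inr hzU]
  refine ⟨w, h.freeSub_mono hAw (hwA w (htW hwt)), v - w, ?_, add_sub_cancel _ _⟩
  rw [mem_closedBall_zero_iff, ← dist_eq_norm]
  exact (mem_ball.1 hvw).le

namespace UniformlyRegular

theorem exists_isCompact_forall_norm_sub_le (hW : h.UniformlyRegular W)
    (hWk : ∀ w ∈ W, ∃ (a : ι → ℝ) (x : ι → M), w = ∑ i, a i • h.toFun (x i))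
    {ε : ℝ} (hε : 0 < ε) :
    ∃ K, IsCompact K ∧ ∀ w ∈ W, ∃ (a : ι → ℝ) (y : ι → M), (∀ i, y i ∈ K) ∧
      ‖w - ∑ i, a i • h.toFun (y i)‖ ≤ ε := by
  set c := ε / 2 ^ Fintype.card ι
  have hc : 0 < c := by positivity
  obtain ⟨K, -, hK, hWK⟩ := hW.2 (c / 2) (by positivity) univ isOpen_univ
  refine ⟨insert base K, hK.insert base, fun w hw => ?_⟩
  obtain ⟨γ, hγ, e, he, hwγ⟩ := hWK hw
  obtain ⟨a, x, rfl⟩ := hWk w hw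
  have hγ' : γ ∈ h.freeSub (insert base K) :=
    h.freeSub_mono (by simp [subset_insert]) hγ
  have hlt : ‖∑ i, a i • h.toFun (x i) - γ‖ < c := by
    rw [← hwγ, add_sub_cancel_left]
    linarith [mem_closedBall_zero_iff.1 he]
  have hn : (range x \ insert base K).ncard ≤ Fintype.card ι := by
    refine (ncard_le_ncard sdiff_subset).trans ?_
    rw [← image_univ, ← Nat.card_eq_fintype_card, ← ncard_univ]
    exact ncard_image_le
  obtain ⟨y, hy, hxy⟩ := h.exists_forall_mem_norm_sub_le (mem_insert _ _) hγ' a _ x hn hlt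
  refine ⟨a, y, hy, hxy.trans ?_⟩
  calc (2 ^ Fintype.card ι - 1) * c ≤ 2 ^ Fintype.card ι * c := by gcongr; linarith
    _ = ε := mul_div_cancel₀ ε (by positivity)

theorem exists_approx_isolated (hW : h.UniformlyRegular W) (p : M) {C : Set M}
    (hC : IsCompact C) (hpC : p ∉ C) {ε : ℝ} (hε : 0 < ε) :
    ∃ r > 0, ∃ S : Set M, (∀ z ∈ S ∪ C, z = p ∨ r ≤ dist z p) ∧
      W ⊆ (h.freeSub S : Set F) + closedBall 0 ε := by
  obtain ⟨K, hKU, hK, hWK⟩ := hW.2 ε hε (ball p 1 \ {p}) (isOpen_ball.sdiff isClosed_singleton)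
  obtain ⟨r, hr, hrK⟩ := (hK.union hC).exists_pos_forall_le_dist (p := p) <| by
    rintro (hpK | hpC')
    exacts [(hKU hpK).2 rfl, hpC hpC']
  refine ⟨min r 1, by positivity, _, ?_, hWK⟩
  rintro z ((hz | hz) | hz)
  · exact .inr ((min_le_left _ _).trans (hrK z (.inl hz)))
  · by_cases hzp : z = p
    · exact .inl hzp
    · exact .inr ((min_le_right _ _).trans (not_lt.1 fun hz' => hz ⟨hz', hzp⟩))
  · exact .inr ((min_le_left _ _).trans (hrK z (.inr hz)))

theorem exists_subseq_near_finiteDimensional (hW : h.UniformlyRegular W)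
    (hWk : ∀ w ∈ W, ∃ (a : ι → ℝ) (x : ι → M), w = ∑ i, a i • h.toFun (x i))
    (u : ℕ → F) (hu : ∀ n, u n ∈ W) {ε : ℝ} (hε : 0 < ε) :
    ∃ φ : ℕ → ℕ, StrictMono φ ∧ ∃ P : Submodule ℝ F, FiniteDimensional ℝ P ∧
      ∀ n, ∃ v ∈ P, ‖u (φ n) - v‖ ≤ ε := by
  set δ := ε / (2 * Fintype.card ι + 1)
  have hδ : 0 < δ := by positivity
  obtain ⟨K, hK, hWK⟩ := hW.exists_isCompact_forall_norm_sub_le hWk hδ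
  choose b y hyK hy using fun n => hWK (u n) (hu n)
  obtain ⟨Y, -, φ, hφ, hyY⟩ := (isCompact_univ_pi fun _ : ι => hK).tendsto_subseq (x := y)
    fun n => mem_univ_pi.2 (hyK n)
  have hC : ∀ p, IsCompact (insert base (range Y) \ {p}) := fun p =>
    ((finite_range Y).insert base).sdiff.isCompact
  choose r hr S hS hWS using fun p => hW.exists_approx_isolated p (hC p) (fun hp => hp.2 rfl) hδ
  have hsep : ∀ p, ∀ z ∈ insert base (range Y), z = p ∨ r p ≤ dist z p := fun p z hz => by
    by_cases hzp : z = p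
    exacts [.inl hzp, hS p z (.inr ⟨hz, hzp⟩)]
  have hev : ∀ᶠ n in atTop, ∀ i j, dist (y (φ n) j) (Y j) ≤ r (Y i) / 4 :=
    eventually_all.2 fun i => eventually_all.2 fun j =>
      (tendsto_pi_nhds.1 hyY j).eventually (closedBall_mem_nhds _ (by linarith [hr (Y i)]))
  obtain ⟨N, hN⟩ := eventually_atTop.1 hev
  refine ⟨fun n => φ (n + N), hφ.comp (strictMono_id.add_const N),
    Submodule.span ℝ (range (h.toFun ∘ Y)), FiniteDimensional.span_of_finite ℝ (finite_range _),
    fun n => ?_⟩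
  set m := φ (n + N)
  refine ⟨∑ j, b m j • h.toFun (Y j),
    Submodule.sum_mem _ fun j _ => Submodule.smul_mem _ _ (Submodule.subset_span ⟨j, rfl⟩), ?_⟩
  have hclustered := h.norm_sum_sub_sum_le_of_clustered (w := u m) hδ.le (b m) (y m) Y
    (fun i z hz => hz.elim (fun hz => hS _ z (.inl hz)) fun hz => hsep _ z (.inl hz))
    (fun i j => hsep _ _ (.inr ⟨j, rfl⟩)) (fun i => hWS _ (hu _)) (hN _ (by omega))
  calc _ ≤ ‖u m - ∑ j, b m j • h.toFun (y m j)‖ +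
        ‖∑ j, b m j • h.toFun (y m j) - ∑ j, b m j • h.toFun (Y j)‖ :=
        norm_sub_le_norm_sub_add_norm_sub _ _ _
    _ ≤ δ + Fintype.card ι * (δ + δ) := by
        gcongr
        · exact hy _
        · exact hclustered.trans (by gcongr; exact hy _)
    _ = (2 * Fintype.card ι + 1) * δ := by ring
    _ = ε := mul_div_cancel₀ _ (by positivity)

end UniformlyRegular

end FreeSpaceData

theorem stmt_11_general {M : Type*} [MetricSpace M] (base : M)
    {F : Type*} [NormedAddCommGroup F] [NormedSpace ℝ F] [CompleteSpace F]
    (h : FreeSpaceData M base F) (k : ℕ)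
    (W : Set F) (hWb : Bornology.IsBounded W)
    (hWk : ∀ w ∈ W, ∃ (a : Fin k → ℝ) (x : Fin k → M),
      w = ∑ i, a i • h.toFun (x i)) :
    IsCompact (closure W) ↔ h.UniformlyRegular W := by
  refine ⟨fun hW => FreeSpaceData.uniformlyRegular_of_totallyBounded
    (hW.totallyBounded.subset subset_closure) hWb fun w hw => ?_, fun hW => ?_⟩
  · obtain ⟨a, x, rfl⟩ := hWk w hw
    exact ⟨range x, finite_range x, h.sum_smul_toFun_mem_freeSub a x⟩
  · have hW' : TotallyBounded W :=
      totallyBounded_of_forall_exists_subseq_near_finiteDimensional hWb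
        fun u hu _ hε => hW.exists_subseq_near_finiteDimensional hWk u hu hε
    exact hW'.closure.isCompact_of_isClosed isClosed_closure

/-- a bounded set of elements supported on at most `k` points is
relatively norm-compact iff it is uniformly regular. -/
theorem stmt_11 {M : Type*} [MetricSpace M] [CompleteSpace M] (base : M)
    {F : Type*} [NormedAddCommGroup F] [NormedSpace ℝ F] [CompleteSpace F]
    (h : FreeSpaceData M base F) (k : ℕ) (hk : 0 < k)
    (W : Set F) (hWb : Bornology.IsBounded W)
    (hWk : ∀ w ∈ W, ∃ (a : Fin k → ℝ) (x : Fin k → M),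
      w = ∑ i, a i • h.toFun (x i)) :
    IsCompact (closure W) ↔ h.UniformlyRegular W :=
  stmt_11_general base h k W hWb hWk
end
end

section
/- Let M be a complete pointed metric space and let K ⊆ F(M) be bounded. Then the following are equivalent: (i) K is relatively norm-compact; (ii) there exists c ≥ 1 such that for every ε > 0 there exist δ > 0 and a compact set C ⊆ M such that for every μ ∈ K there is a family of reals (a_{(x,y)}) indexed by the ordered pairs (x,y) of distinct points of C with ∑_{(x,y)} |a_{(x,y)}| < ∞, ‖∑_{(x,y)} a_{(x,y)} m_{xy} − μ‖ < ε, ∑_{(x,y)} |a_{(x,y)}| ≤ c‖μ‖, and ∑_{(x,y) : d(x,y) < δ} |a_{(x,y)}| < ε. -/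
/-!
(i) ⇒ (ii): by Hahn–Banach, and since every Lipschitz function on `M` extends to a functional
of the same norm, every `μ` is a limit of finite combinations of molecules of mass
`< ‖μ‖ + η`. Approximating the points of a finite `ε/3`-net of `K` this way involves only
finitely many molecules; their endpoints form `C`, and `δ` is below their lengths.

(ii) ⇒ (i): dropping the molecules shorter than `δ` moves `μ` by less than `ε`, and the rest of
the series lies in the closed absolutely convex hull of the compact set
`c R • {m_{xy} : x, y ∈ C, d(x, y) ≥ δ}` (where `‖μ‖ ≤ R` on `K`), which is totally bounded.
-/

open Metric Set Filter Pointwise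

noncomputable section

open scoped Topology

section AbsConvex

variable {ι E : Type*} [AddCommGroup E] [Module ℝ E] {s : Set E}

theorem AbsConvex.sum_smul_mem (hs : AbsConvex ℝ s) (h0 : (0 : E) ∈ s) {t : Finset ι}
    {b : ι → ℝ} {v : ι → E} (hv : ∀ i ∈ t, b i ≠ 0 → v i ∈ s) (hb : ∑ i ∈ t, |b i| ≤ 1) :
    ∑ i ∈ t, b i • v i ∈ s := by
  set W := ∑ i ∈ t, |b i|
  rcases (Finset.sum_nonneg fun i _ => abs_nonneg (b i)).eq_or_lt with hW | hW
  · have hb0 : ∀ i ∈ t, b i = 0 := fun i hi =>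
      abs_eq_zero.1 ((Finset.sum_eq_zero_iff_of_nonneg fun i _ => abs_nonneg (b i)).1 hW.symm i hi)
    rwa [Finset.sum_eq_zero fun i hi => by rw [hb0 i hi, zero_smul]]
  -- `b i • v i = |b i| • z i` with `z i ∈ s`, so the sum is `W •` a convex combination of the `z i`.
  set z : ι → E := fun i => (b i / |b i|) • v i
  have hz : ∀ i ∈ t, z i ∈ s := by
    intro i hi
    by_cases hbi : b i = 0
    · simpa [z, hbi] using h0
    · refine hs.1.smul_mem ?_ (hv i hi hbi)
      rw [norm_div, Real.norm_eq_abs, Real.norm_eq_abs, abs_abs, div_self (abs_ne_zero.2 hbi)]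
  have hcomb : ∑ i ∈ t, (|b i| / W) • z i ∈ s :=
    hs.2.sum_mem (fun i _ => by positivity) (by rw [← Finset.sum_div, div_self hW.ne']) hz
  convert hs.1.smul_mem (a := W) (by rwa [Real.norm_eq_abs, abs_of_pos hW]) hcomb using 1
  rw [Finset.smul_sum]
  refine Finset.sum_congr rfl fun i _ => ?_
  by_cases hbi : b i = 0
  · simp [z, hbi]
  · rw [smul_smul, smul_smul, mul_div_cancel₀ _ hW.ne', mul_div_cancel₀ _ (abs_ne_zero.2 hbi)]

theorem AbsConvex.hasSum_mem_closure [TopologicalSpace E] (hs : AbsConvex ℝ s)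
    (h0 : (0 : E) ∈ s) {b : ι → ℝ} {v : ι → E} (hv : ∀ i, b i ≠ 0 → v i ∈ s)
    (hb : Summable fun i => |b i|) (hb1 : ∑' i, |b i| ≤ 1) {w : E}
    (hw : HasSum (fun i => b i • v i) w) : w ∈ _root_.closure s :=
  mem_closure_of_tendsto hw <| Eventually.of_forall fun t =>
    hs.sum_smul_mem h0 (fun i _ => hv i) ((hb.sum_le_tsum t fun _ _ => abs_nonneg _).trans hb1)

end AbsConvex

theorem HasSum.exists_hasSum_ite_zero_smul {ι E : Type*} [NormedAddCommGroup E] [NormedSpace ℝ E]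
    [CompleteSpace E] {a : ι → ℝ} {v : ι → E} {ν : E} (hν : HasSum (fun i => a i • v i) ν)
    (hv : ∀ i, ‖v i‖ ≤ 1) (ha : Summable fun i => |a i|) (p : ι → Prop) [DecidablePred p] :
    ∃ w, HasSum (fun i => (if p i then 0 else a i) • v i) w ∧
      ‖ν - w‖ ≤ ∑' i, if p i then |a i| else 0 := by
  set g : ι → E := fun i => if p i then a i • v i else 0
  set e : ι → ℝ := fun i => if p i then |a i| else 0
  have hge : ∀ i, ‖g i‖ ≤ e i := fun i => by
    by_cases hi : p i
    · simpa [g, e, hi, norm_smul] using mul_le_of_le_one_right (abs_nonneg (a i)) (hv i)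
    · simp [g, e, hi]
  have he : Summable e := ha.of_nonneg_of_le (fun i => by by_cases hi : p i <;> simp [e, hi])
    fun i => by by_cases hi : p i <;> simp [e, hi]
  refine ⟨ν - ∑' i, g i, ?_, ?_⟩
  · convert hν.sub (he.of_norm_bounded hge).hasSum using 2 with i
    by_cases hi : p i <;> simp [g, hi]
  · rw [sub_sub_cancel]
    exact tsum_of_norm_bounded he.hasSum hge

theorem totallyBounded_of_forall_exists_dist_lt {α : Type*} [PseudoMetricSpace α] {s : Set α}
    (H : ∀ ε > 0, ∃ t, TotallyBounded t ∧ ∀ x ∈ s, ∃ y ∈ t, dist x y < ε) :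
    TotallyBounded s := by
  refine Metric.totallyBounded_iff.2 fun ε hε => ?_
  obtain ⟨t, ht, hst⟩ := H (ε / 2) (half_pos hε)
  obtain ⟨u, hu, htu⟩ := Metric.totallyBounded_iff.1 ht (ε / 2) (half_pos hε)
  refine ⟨u, hu, fun x hx => ?_⟩
  obtain ⟨y, hy, hxy⟩ := hst x hx
  obtain ⟨z, hz, hyz⟩ := Set.mem_iUnion₂.1 (htu hy)
  rw [Metric.mem_ball] at hyz
  exact Set.mem_iUnion₂.2 ⟨z, hz, Metric.mem_ball.2 <| by linarith [dist_triangle x y z]⟩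

theorem Set.Finite.exists_pos_le_dist {M : Type*} [MetricSpace M] {P : Set (M × M)}
    (hP : P.Finite) : ∃ δ > 0, ∀ p ∈ P, p.1 ≠ p.2 → δ ≤ dist p.1 p.2 := by
  have hfar : ∀ p ∈ P, ∀ᶠ δ in 𝓝 (0 : ℝ), p.1 ≠ p.2 → δ ≤ dist p.1 p.2 := fun p _ => by
    rcases eq_or_ne p.1 p.2 with hp | hp
    · exact Eventually.of_forall fun _ h => absurd hp h
    · exact (eventually_le_nhds (dist_pos.2 hp)).mono fun _ hδ _ => hδ
  exact ((eventually_mem_nhdsWithin (s := Ioi 0)).and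
    (nhdsWithin_le_nhds ((hP.eventually_all).2 hfar))).exists

theorem Finsupp.summable_abs {ι : Type*} (b : ι →₀ ℝ) : Summable fun i => |b i| :=
  summable_of_ne_finset_zero (s := b.support) fun i hi => by simp [Finsupp.notMem_support_iff.1 hi]

theorem Finsupp.convex_setOf_tsum_abs_le (ι : Type*) (r : ℝ) :
    Convex ℝ {b : ι →₀ ℝ | ∑' i, |b i| ≤ r} := by
  intro b₁ hb₁ b₂ hb₂ t₁ t₂ ht₁ ht₂ ht
  calc ∑' i, |(t₁ • b₁ + t₂ • b₂) i|
      ≤ ∑' i, (t₁ * |b₁ i| + t₂ * |b₂ i|) := by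
        refine (t₁ • b₁ + t₂ • b₂).summable_abs.tsum_le_tsum (fun i => ?_)
          ((b₁.summable_abs.mul_left t₁).add (b₂.summable_abs.mul_left t₂))
        simpa [abs_mul, abs_of_nonneg ht₁, abs_of_nonneg ht₂] using
          abs_add_le (t₁ * b₁ i) (t₂ * b₂ i)
    _ = t₁ * ∑' i, |b₁ i| + t₂ * ∑' i, |b₂ i| := by
        rw [(b₁.summable_abs.mul_left t₁).tsum_add (b₂.summable_abs.mul_left t₂), tsum_mul_left,
          tsum_mul_left]
    _ ≤ t₁ * r + t₂ * r := by gcongr <;> assumption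
    _ = r := by rw [← add_mul, ht, one_mul]

namespace FreeSpaceData

variable {M : Type*} [MetricSpace M] {base : M}
  {F : Type*} [NormedAddCommGroup F] [NormedSpace ℝ F] (h : FreeSpaceData M base F)

theorem isometry : Isometry h.toFun :=
  Isometry.of_dist_eq fun x y => by rw [dist_eq_norm, h.norm_sub]

theorem dist_smul_molecule (x y : M) :
    dist x y • h.molecule x y = h.toFun x - h.toFun y := by
  rcases eq_or_ne x y with rfl | hxy
  · simp
  · exact smul_inv_smul₀ (dist_ne_zero.2 hxy) _

theorem molecule_self (x : M) : h.molecule x x = 0 := by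
  simp [molecule]

theorem norm_molecule_le (x y : M) : ‖h.molecule x y‖ ≤ 1 := by
  rw [molecule, norm_smul, h.norm_sub, norm_inv, Real.norm_of_nonneg dist_nonneg]
  exact inv_mul_le_one_of_le₀ le_rfl dist_nonneg

theorem continuousOn_molecule :
    ContinuousOn (fun p : M × M => h.molecule p.1 p.2) {p | p.1 ≠ p.2} :=
  (continuous_dist.continuousOn.inv₀ fun _ hp => dist_ne_zero.2 hp).smul
    (h.isometry.continuous.fst'.sub h.isometry.continuous.snd').continuousOn

theorem isCompact_image_molecule {C : Set M} (hC : IsCompact C) {δ : ℝ} (hδ : 0 < δ) :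
    IsCompact ((fun p : M × M => h.molecule p.1 p.2) '' {p ∈ C ×ˢ C | δ ≤ dist p.1 p.2}) :=
  ((hC.prod hC).inter_right (isClosed_le continuous_const continuous_dist)).image_of_continuousOn
    (h.continuousOn_molecule.mono fun _ hp => dist_pos.1 (hδ.trans_le hp.2))

theorem opNorm_le_of_forall_molecule {φ : F →L[ℝ] ℝ} {L : ℝ}
    (hφ : ∀ x y, |φ (h.molecule x y)| ≤ L) : ‖φ‖ ≤ L := by
  have hL : 0 ≤ L := (abs_nonneg _).trans (hφ base base)
  have hlip : LipschitzWith L.toNNReal (fun x => φ (h.toFun x)) :=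
    LipschitzWith.of_dist_le' fun x y => by
      rw [Real.dist_eq, ← map_sub, ← h.dist_smul_molecule, map_smul, smul_eq_mul, abs_mul,
        abs_of_nonneg dist_nonneg, mul_comm]
      exact mul_le_mul_of_nonneg_right (hφ x y) dist_nonneg
  obtain ⟨ψ, hψ, hψφ⟩ := h.extend _ _ hlip (by simp [h.map_base])
  have : ψ = φ := ContinuousLinearMap.ext_on
    (Submodule.dense_iff_topologicalClosure_eq_top.2 h.dense_span) (Set.forall_mem_range.2 hψφ)
  rw [← this]
  exact hψ.trans_eq (Real.coe_toNNReal _ hL)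

def moleculeComb : (M × M →₀ ℝ) →ₗ[ℝ] F :=
  Finsupp.linearCombination ℝ fun p => h.molecule p.1 p.2

theorem mem_closure_moleculeComb_image {μ : F} {r : ℝ} (hμ : ‖μ‖ < r) :
    μ ∈ closure (h.moleculeComb '' {b | ∑' p, |b p| ≤ r}) := by
  have hr : 0 < r := (norm_nonneg μ).trans_lt hμ
  by_contra hμD
  obtain ⟨φ, u, hφ, hu⟩ := geometric_hahn_banach_closed_point
    ((Finsupp.convex_setOf_tsum_abs_le _ r).linear_image _).closure isClosed_closure hμD
  have hD : ∀ b : M × M →₀ ℝ, ∑' p, |b p| ≤ r → φ (h.moleculeComb b) < u :=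
    fun b hb => hφ _ (subset_closure ⟨b, hb, rfl⟩)
  have hsingle : ∀ x y t, |t| ≤ r → t * φ (h.molecule x y) < u := fun x y t ht => by
    simpa [moleculeComb, tsum_eq_single (x, y), Finsupp.single_apply] using
      hD (Finsupp.single (x, y) t) (by
        rwa [tsum_eq_single (x, y) fun p hp => by simp [Ne.symm hp],
          Finsupp.single_eq_same])
  have hφm : ∀ x y, |φ (h.molecule x y)| ≤ u / r := fun x y => by
    have h₁ := hsingle x y r (abs_of_pos hr).le
    have h₂ := hsingle x y (-r) (by rw [abs_neg, abs_of_pos hr])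
    rw [le_div_iff₀ hr]
    rcases abs_cases (φ (h.molecule x y)) with ⟨habs, -⟩ | ⟨habs, -⟩ <;> rw [habs] <;> linarith
  have hφμ : φ μ < u := calc
    φ μ ≤ ‖φ‖ * ‖μ‖ := (le_abs_self _).trans (φ.le_opNorm μ)
    _ ≤ u / r * ‖μ‖ := by gcongr; exact h.opNorm_le_of_forall_molecule hφm
    _ < u / r * r := by
        have hu0 : 0 < u := by simpa using hD 0 (by simpa using hr.le)
        gcongr
    _ = u := div_mul_cancel₀ u hr.ne'
  exact hu.not_gt hφμ

theorem exists_moleculeComb_near (μ : F) {η : ℝ} (hη : 0 < η) :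
    ∃ b : M × M →₀ ℝ, ∑' p, |b p| ≤ ‖μ‖ + η ∧ dist (h.moleculeComb b) μ < η := by
  obtain ⟨_, ⟨b, hb, rfl⟩, hbμ⟩ :=
    Metric.mem_closure_iff.1 (h.mem_closure_moleculeComb_image (lt_add_of_pos_right _ hη)) η hη
  exact ⟨b, hb, by rwa [dist_comm]⟩

/-- Condition (ii) of the theorem, for a single `μ`. -/
def MolecularApprox (C : Set M) (c δ ε : ℝ) (μ : F) : Prop :=
  ∃ a : {p : M × M // p.1 ∈ C ∧ p.2 ∈ C ∧ p.1 ≠ p.2} → ℝ,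
    Summable (fun p => |a p|) ∧
    (∃ ν : F, HasSum (fun p => a p • h.molecule p.1.1 p.1.2) ν ∧ ‖ν - μ‖ < ε) ∧
    (∑' p, |a p|) ≤ c * ‖μ‖ ∧
    (∑' p : {p : M × M // p.1 ∈ C ∧ p.2 ∈ C ∧ p.1 ≠ p.2},
      if dist p.1.1 p.1.2 < δ then |a p| else 0) < ε

theorem molecularApprox_of_moleculeComb {C : Set M} {c δ ε : ℝ} {μ : F} (b : M × M →₀ ℝ)
    (hbC : ∀ p ∈ b.support, p.1 ∈ C ∧ p.2 ∈ C)
    (hbδ : ∀ p ∈ b.support, p.1 ≠ p.2 → δ ≤ dist p.1 p.2) (hε : 0 < ε)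
    (hbμ : ‖h.moleculeComb b - μ‖ < ε) (hb : ∑' p, |b p| ≤ c * ‖μ‖) :
    h.MolecularApprox C c δ ε μ := by
  set S : Set (M × M) := {p | p.1 ∈ C ∧ p.2 ∈ C ∧ p.1 ≠ p.2}
  have hsupp : Function.support (fun p => b p • h.molecule p.1 p.2) ⊆ S := fun p hp => by
    have hbp : p ∈ b.support := Finsupp.mem_support_iff.2 (left_ne_zero_of_smul hp)
    refine ⟨(hbC p hbp).1, (hbC p hbp).2, fun hp₁₂ => right_ne_zero_of_smul hp ?_⟩
    rw [hp₁₂, molecule_self]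
  have hsmall : ∀ q : {p : M × M // p.1 ∈ C ∧ p.2 ∈ C ∧ p.1 ≠ p.2},
      (if dist q.1.1 q.1.2 < δ then |b q.1| else 0) = 0 := fun q => by
    split_ifs with hq
    · by_contra hbq
      exact (hbδ q.1 (Finsupp.mem_support_iff.2 (abs_ne_zero.1 hbq)) q.2.2.2).not_gt hq
    · rfl
  refine ⟨fun q => b q.1, b.summable_abs.subtype S, ⟨h.moleculeComb b, ?_, hbμ⟩, ?_, ?_⟩
  · refine (hasSum_subtype_iff_of_support_subset hsupp).2 ?_
    rw [moleculeComb, Finsupp.linearCombination_apply]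
    exact hasSum_sum_of_ne_finset_zero fun p hp => by
      rw [Finsupp.notMem_support_iff.1 hp, zero_smul]
  · exact (b.summable_abs.tsum_subtype_le (fun p => |b p|) S fun _ => abs_nonneg _).trans hb
  · exact (tsum_congr hsmall).trans_lt (by rwa [tsum_zero])

theorem exists_molecularApprox_of_isCompact_closure {K : Set F} (hK : IsCompact (closure K)) :
    ∃ c : ℝ, 1 ≤ c ∧ ∀ ε : ℝ, 0 < ε → ∃ δ : ℝ, 0 < δ ∧ ∃ C : Set M, IsCompact C ∧
      ∀ μ ∈ K, h.MolecularApprox C c δ ε μ := by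
  refine ⟨3, by norm_num, fun ε hε => ?_⟩
  obtain ⟨t, -, ht, hKt⟩ := finite_approx_of_totallyBounded
    (hK.totallyBounded.subset subset_closure) (ε / 3) (by positivity)
  choose b hb_mass hb_dist using
    fun y : F => h.exists_moleculeComb_near y (by positivity : 0 < ε / 3)
  set P : Set (M × M) := ⋃ y ∈ t, ↑(b y).support
  have hP : P.Finite := ht.biUnion fun y _ => (b y).support.finite_toSet
  obtain ⟨δ, hδ, hδP⟩ := hP.exists_pos_le_dist
  refine ⟨δ, hδ, Prod.fst '' P ∪ Prod.snd '' P, ((hP.image _).union (hP.image _)).isCompact,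
    fun μ hμ => ?_⟩
  -- The mass bound `≤ 3 ‖μ‖` leaves no room for an error term when `μ` is small; use `0` then.
  by_cases hμε : ‖μ‖ ≤ ε / 2
  · exact h.molecularApprox_of_moleculeComb 0 (by simp) (by simp) hε
      (by rw [map_zero, zero_sub, norm_neg]; linarith) (by simp)
  obtain ⟨y, hy, hμy⟩ := mem_iUnion₂.1 (hKt hμ)
  rw [mem_ball] at hμy
  have hyP : ∀ p ∈ (b y).support, p ∈ P := fun p hp => mem_iUnion₂.2 ⟨y, hy, hp⟩
  refine h.molecularApprox_of_moleculeComb (b y)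
    (fun p hp => ⟨Or.inl ⟨p, hyP p hp, rfl⟩, Or.inr ⟨p, hyP p hp, rfl⟩⟩)
    (fun p hp => hδP p (hyP p hp)) hε ?_ ?_
  · rw [← dist_eq_norm]
    linarith [dist_triangle (h.moleculeComb (b y)) y μ, hb_dist y, dist_comm μ y]
  · have : ‖y‖ ≤ ‖μ‖ + dist μ y := by
      rw [dist_comm, dist_eq_norm]; linarith [norm_sub_norm_le y μ]
    linarith [hb_mass y]

theorem totallyBounded_of_molecularApprox [CompleteSpace F] {K : Set F}
    (hK : Bornology.IsBounded K) {c : ℝ} (hc : 1 ≤ c)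
    (H : ∀ ε : ℝ, 0 < ε → ∃ δ : ℝ, 0 < δ ∧ ∃ C : Set M, IsCompact C ∧
      ∀ μ ∈ K, h.MolecularApprox C c δ ε μ) :
    TotallyBounded K := by
  obtain ⟨R, hR, hKR⟩ := hK.exists_pos_norm_le
  have hr : 0 < c * R := mul_pos (by linarith) hR
  refine totallyBounded_of_forall_exists_dist_lt fun ε hε => ?_
  obtain ⟨δ, hδ, C, hC, hKC⟩ := H (ε / 2) (half_pos hε)
  set V := (c * R) • ((fun p : M × M => h.molecule p.1 p.2) '' {p ∈ C ×ˢ C | δ ≤ dist p.1 p.2})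
  refine ⟨closure (absConvexHull ℝ (insert 0 V)),
    (((h.isCompact_image_molecule hC hδ).smul _).insert 0).totallyBounded.absConvexHull.closure,
    fun μ hμ => ?_⟩
  obtain ⟨a, ha, ⟨ν, hν, hνμ⟩, hmass, hsmall⟩ := hKC μ hμ
  obtain ⟨w, hw, hνw⟩ := hν.exists_hasSum_ite_zero_smul (fun _ => h.norm_molecule_le _ _) ha
    (fun q => dist q.1.1 q.1.2 < δ)
  set b := fun q => (if dist q.1.1 q.1.2 < δ then 0 else a q) / (c * R)
  have hba : ∀ q, |b q| ≤ |a q| / (c * R) := fun q => by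
    rw [abs_div, abs_of_pos hr]
    exact div_le_div_of_nonneg_right (by split_ifs <;> simp) hr.le
  have hb : Summable fun q => |b q| :=
    (ha.div_const _).of_nonneg_of_le (fun _ => abs_nonneg _) hba
  refine ⟨w, absConvex_absConvexHull.hasSum_mem_closure (subset_absConvexHull (mem_insert _ _))
    (b := b) (v := fun q => (c * R) • h.molecule q.1.1 q.1.2) (fun q hq => ?_) hb ?_ ?_, ?_⟩
  · refine subset_absConvexHull (mem_insert_of_mem _ (smul_mem_smul_set ⟨q.1, ⟨?_, ?_⟩, rfl⟩))
    · exact ⟨q.2.1, q.2.2.1⟩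
    · by_contra hq'
      simp [b, not_le.1 hq'] at hq
  · calc ∑' q, |b q| ≤ ∑' q, |a q| / (c * R) := hb.tsum_le_tsum hba (ha.div_const _)
      _ = (∑' q, |a q|) / (c * R) := tsum_div_const
      _ ≤ c * R / (c * R) := by gcongr; exact hmass.trans (by gcongr; exact hKR μ hμ)
      _ = 1 := div_self hr.ne'
  · convert hw using 2 with q
    rw [smul_smul, div_mul_cancel₀ _ hr.ne']
  · rw [dist_eq_norm]
    calc ‖μ - w‖ ≤ ‖ν - μ‖ + ‖ν - w‖ := by
          rw [norm_sub_rev ν μ]; exact norm_sub_le_norm_sub_add_norm_sub μ ν w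
      _ < ε / 2 + ε / 2 := add_lt_add_of_lt_of_le hνμ (hνw.trans hsmall.le)
      _ = ε := add_halves ε

end FreeSpaceData

theorem stmt_19_general {M : Type*} [MetricSpace M] (base : M)
    {F : Type*} [NormedAddCommGroup F] [NormedSpace ℝ F] [CompleteSpace F]
    (h : FreeSpaceData M base F) (K : Set F) (hK : Bornology.IsBounded K) :
    IsCompact (closure K) ↔
      ∃ c : ℝ, 1 ≤ c ∧ ∀ ε : ℝ, 0 < ε → ∃ δ : ℝ, 0 < δ ∧ ∃ C : Set M, IsCompact C ∧
        ∀ μ ∈ K, ∃ a : {p : M × M // p.1 ∈ C ∧ p.2 ∈ C ∧ p.1 ≠ p.2} → ℝ,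
          Summable (fun p => |a p|) ∧
          (∃ ν : F, HasSum (fun p => a p • h.molecule p.1.1 p.1.2) ν ∧ ‖ν - μ‖ < ε) ∧
          (∑' p, |a p|) ≤ c * ‖μ‖ ∧
          (∑' p : {p : M × M // p.1 ∈ C ∧ p.2 ∈ C ∧ p.1 ≠ p.2},
            if dist p.1.1 p.1.2 < δ then |a p| else 0) < ε :=
  ⟨h.exists_molecularApprox_of_isCompact_closure, fun ⟨_, hc, H⟩ =>
    (h.totallyBounded_of_molecularApprox hK hc H).closure.isCompact_of_isClosed isClosed_closure⟩

/-- characterization of relatively norm-compact subsets of `F(M)` via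
approximation by absolutely convergent combinations of "large" molecules with endpoints
in a compact set. -/
theorem stmt_19 {M : Type*} [MetricSpace M] [CompleteSpace M] (base : M)
    {F : Type*} [NormedAddCommGroup F] [NormedSpace ℝ F] [CompleteSpace F]
    (h : FreeSpaceData M base F) (K : Set F) (hK : Bornology.IsBounded K) :
    IsCompact (closure K) ↔
      ∃ c : ℝ, 1 ≤ c ∧ ∀ ε : ℝ, 0 < ε → ∃ δ : ℝ, 0 < δ ∧ ∃ C : Set M, IsCompact C ∧
        ∀ μ ∈ K, ∃ a : {p : M × M // p.1 ∈ C ∧ p.2 ∈ C ∧ p.1 ≠ p.2} → ℝ,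
          Summable (fun p => |a p|) ∧
          (∃ ν : F, HasSum (fun p => a p • h.molecule p.1.1 p.1.2) ν ∧ ‖ν - μ‖ < ε) ∧
          (∑' p, |a p|) ≤ c * ‖μ‖ ∧
          (∑' p : {p : M × M // p.1 ∈ C ∧ p.2 ∈ C ∧ p.1 ≠ p.2},
            if dist p.1.1 p.1.2 < δ then |a p| else 0) < ε :=
  stmt_19_general base h K hK
end
end
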